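/- arXiv:1803.10504 — 5 statements merged into one kernel-verified Lean document; each statement's English description precedes it below -/
import Mathlib

section
/- If G is a group and I is an invariant group ideal on G, then the group multiplication (x,y) ↦ xy and inversion x ↦ x^{-1} are coarse mappings with respect to the coarse structure E_I (and the product coarse structure on G × G), i.e., (G, E_I) is a coarse group. -/
/-- A *coarse structure* on `X`: every entourage contains the diagonal, and the family
is closed under composition, inversion, and passing to subsets containing the diagonal. -/
def IsCoarseStructure {X : Type*} (E : Set (Set (X × X))) : Prop :=
  (∀ ε ∈ E, ∀ x : X, (x, x) ∈ ε) ∧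
  (∀ ε ∈ E, ∀ δ ∈ E, {p : X × X | ∃ z : X, (p.1, z) ∈ ε ∧ (z, p.2) ∈ δ} ∈ E) ∧
  (∀ ε ∈ E, {p : X × X | (p.2, p.1) ∈ ε} ∈ E) ∧
  (∀ ε ∈ E, ∀ ε' ⊆ ε, (∀ x : X, (x, x) ∈ ε') → ε' ∈ E)

/-- A family `I` of subsets of a group `G` is a *group ideal*. -/
def IsGroupIdeal {G : Type*} [Group G] (I : Set (Set G)) : Prop :=
  (∀ A ∈ I, ∀ B ⊆ A, B ∈ I) ∧
  (∀ A ∈ I, ∀ B ∈ I, A ∪ B ∈ I) ∧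
  (∀ A : Set G, A.Finite → A ∈ I) ∧
  (∀ A ∈ I, ∀ B ∈ I, {x : G | ∃ a ∈ A, ∃ b ∈ B, x = a * b⁻¹} ∈ I)

/-- The entourage `ε_A = {(x, g•x) : x ∈ X, g ∈ A}` determined by `A ⊆ G`. -/
def entourageOf {G X : Type*} [Group G] [MulAction G X] (A : Set G) : Set (X × X) :=
  {p : X × X | ∃ g ∈ A, p.2 = g • p.1}

/-- The coarse structure `E(G, I, X)` induced on a `G`-space `X` by a group ideal `I`:
all diagonal-containing subsets of some `ε_A` with `A ∈ I`, `1 ∈ A`. -/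
def actionCoarse (G : Type*) [Group G] (I : Set (Set G)) (X : Type*) [MulAction G X] :
    Set (Set (X × X)) :=
  {ε | (∀ x : X, (x, x) ∈ ε) ∧ ∃ A ∈ I, (1 : G) ∈ A ∧ ε ⊆ entourageOf A}

/-- `E_I`: the coarse structure on `G` induced by the left action of `G` on itself. -/
def idealCoarse {G : Type*} [Group G] (I : Set (Set G)) : Set (Set (G × G)) :=
  actionCoarse G I G

/-- The ball `B(x, ε)`. -/
def ball {X : Type*} (ε : Set (X × X)) (x : X) : Set X := {y : X | (x, y) ∈ ε}


/-- `f` is a *coarse (bornologous) mapping* from `(X, EX)` to `(Y, EY)`. -/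
def IsCoarseMap {X Y : Type*} (EX : Set (Set (X × X))) (EY : Set (Set (Y × Y)))
    (f : X → Y) : Prop :=
  ∀ ε ∈ EX, ∃ δ ∈ EY, ∀ p ∈ ε, (f p.1, f p.2) ∈ δ

/-- The product coarse structure on `X × Y`, with base the componentwise products of
entourages. -/
def prodCoarse {X Y : Type*} (EX : Set (Set (X × X))) (EY : Set (Set (Y × Y))) :
    Set (Set ((X × Y) × (X × Y))) :=
  {η | (∀ q : X × Y, (q, q) ∈ η) ∧ ∃ ε ∈ EX, ∃ δ ∈ EY,
    η ⊆ {p : (X × Y) × (X × Y) | (p.1.1, p.2.1) ∈ ε ∧ (p.1.2, p.2.2) ∈ δ}}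

/-- `(G, E)` is a *coarse group*: the multiplication and inversion are coarse maps. -/
def IsCoarseGroup {G : Type*} [Group G] (E : Set (Set (G × G))) : Prop :=
  IsCoarseMap (prodCoarse E E) E (fun p => p.1 * p.2) ∧
  IsCoarseMap E E (fun x : G => x⁻¹)

/-- `(G, E)` is a *left coarse group*. -/
def IsLeftCoarseGroup {G : Type*} [Group G] (E : Set (Set (G × G))) : Prop :=
  ∀ ε ∈ E, ∃ ε' ∈ E, ∀ g x y : G, (x, y) ∈ ε → (g * x, g * y) ∈ ε'

/-- `(G, E)` is a *right coarse group*. -/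
def IsRightCoarseGroup {G : Type*} [Group G] (E : Set (Set (G × G))) : Prop :=
  ∀ ε ∈ E, ∃ ε' ∈ E, ∀ g x y : G, (x, y) ∈ ε → (x * g, y * g) ∈ ε'

/-- A coarse structure is *connected* if any two points are related by some entourage. -/
def IsConnectedCoarse {X : Type*} (E : Set (Set (X × X))) : Prop :=
  ∀ x y : X, ∃ ε ∈ E, (x, y) ∈ ε

/-- A group ideal `I` is *invariant* if `⋃_{g ∈ G} g⁻¹ A g ∈ I` for each `A ∈ I`. -/
def IsInvariantIdeal {G : Type*} [Group G] (I : Set (Set G)) : Prop :=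
  ∀ A ∈ I, {x : G | ∃ g : G, ∃ a ∈ A, x = g⁻¹ * a * g} ∈ I

/-- If `I` is an invariant group ideal on `G`, then multiplication and inversion are
coarse with respect to `E_I`, i.e. `(G, E_I)` is a coarse group. -/
theorem idealCoarse_isCoarseGroup_of_invariant {G : Type*} [Group G]
    (I : Set (Set G)) (hI : IsGroupIdeal I) (hinv : IsInvariantIdeal I) :
    IsCoarseGroup (idealCoarse I) := by
  obtain ⟨hsub, hunion, hfin, hmul⟩ := hI
  have hprod : ∀ A ∈ I, ∀ B ∈ I, {x : G | ∃ a ∈ A, ∃ b ∈ B, x = a * b} ∈ I := by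
    intro A hA B hB
    have hBinv : {x : G | ∃ a ∈ ({1} : Set G), ∃ b ∈ B, x = a * b⁻¹} ∈ I :=
      hmul _ (hfin _ (Set.finite_singleton 1)) _ hB
    refine hsub _ (hmul A hA _ hBinv) _ ?_
    rintro x ⟨a, ha, b, hb, rfl⟩
    exact ⟨a, ha, b⁻¹, ⟨1, rfl, b, hb, by group⟩, by group⟩
  constructor
  · rintro η ⟨hdiag, ε, ⟨hεd, A, hA, h1A, hεA⟩, δ, ⟨hδd, B, hB, h1B, hδB⟩, hη⟩
    have hC : {x : G | ∃ g : G, ∃ a ∈ B, x = g⁻¹ * a * g} ∈ I := hinv B hB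
    have h1C : (1:G) ∈ {x : G | ∃ g : G, ∃ a ∈ B, x = g⁻¹ * a * g} := ⟨1, 1, h1B, by simp⟩
    have hD : {x : G | ∃ a ∈ A, ∃ b ∈ {x : G | ∃ g : G, ∃ a ∈ B, x = g⁻¹ * a * g}, x = a * b} ∈ I :=
      hprod A hA _ hC
    have h1D : (1:G) ∈ {x : G | ∃ a ∈ A, ∃ b ∈ {x : G | ∃ g : G, ∃ a ∈ B, x = g⁻¹ * a * g}, x = a * b} :=
      ⟨1, h1A, 1, h1C, by simp⟩
    refine ⟨entourageOf _, ⟨fun x => ⟨1, h1D, by simp⟩, _, hD, h1D, subset_rfl⟩, ?_⟩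
    rintro ⟨⟨x, y⟩, ⟨x', y'⟩⟩ hp
    obtain ⟨h1, h2⟩ := hη hp
    obtain ⟨a, ha, hx'⟩ := hεA h1
    obtain ⟨b, hb, hy'⟩ := hδB h2
    refine ⟨a * (x * b * x⁻¹), ⟨a, ha, x * b * x⁻¹, ⟨x⁻¹, b, hb, by group⟩, rfl⟩, ?_⟩
    simp only [smul_eq_mul] at hx' hy' ⊢
    rw [hx', hy']; group
  · rintro ε ⟨hεd, A, hA, h1A, hεA⟩
    have hAinv : {x : G | ∃ a ∈ ({1} : Set G), ∃ b ∈ A, x = a * b⁻¹} ∈ I :=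
      hmul _ (hfin _ (Set.finite_singleton 1)) _ hA
    have hD : {x : G | ∃ g : G, ∃ a ∈ {x : G | ∃ a ∈ ({1} : Set G), ∃ b ∈ A, x = a * b⁻¹}, x = g⁻¹ * a * g} ∈ I :=
      hinv _ hAinv
    have h1D : (1:G) ∈ {x : G | ∃ g : G, ∃ a ∈ {x : G | ∃ a ∈ ({1} : Set G), ∃ b ∈ A, x = a * b⁻¹}, x = g⁻¹ * a * g} :=
      ⟨1, 1, ⟨1, rfl, 1, h1A, by simp⟩, by simp⟩
    refine ⟨entourageOf _, ⟨fun x => ⟨1, h1D, by simp⟩, _, hD, h1D, subset_rfl⟩, ?_⟩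
    rintro ⟨x, y⟩ hp
    obtain ⟨a, ha, hy⟩ := hεA hp
    refine ⟨x⁻¹ * a⁻¹ * x, ⟨x, 1 * a⁻¹, ⟨1, rfl, a, ha, rfl⟩, by group⟩, ?_⟩
    simp only [smul_eq_mul] at hy ⊢
    rw [hy]; group
end

section
/- Let G be a group with coarse structure E. Then (G, E) is a coarse group (multiplication and inversion are coarse) if and only if (G, E) is both a left coarse group and a right coarse group. -/
/-- A group `G` with a (connected) coarse structure `E` is a coarse group if and only if
it is both a left coarse group and a right coarse group. -/
theorem isCoarseGroup_iff_left_and_right {G : Type*} [Group G]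
    (E : Set (Set (G × G))) (hE : IsCoarseStructure E) (hc : IsConnectedCoarse E) :
    IsCoarseGroup E ↔ (IsLeftCoarseGroup E ∧ IsRightCoarseGroup E) := by
  obtain ⟨hdiag, hcomp, hsymm, hsub⟩ := hE
  obtain ⟨ε₀, hε₀, -⟩ := hc 1 1
  have hΔ : {p : G × G | p.1 = p.2} ∈ E := by
    apply hsub ε₀ hε₀
    · intro p hp
      have : p = (p.1, p.2) := rfl
      rw [this, hp]
      exact hdiag ε₀ hε₀ p.2
    · intro x; rfl
  constructor
  · rintro ⟨hmul, hinv⟩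
    constructor
    · intro ε hε
      have hη : ({p : (G × G) × (G × G) | p.1.1 = p.2.1 ∧ (p.1.2, p.2.2) ∈ ε}
          ∈ prodCoarse E E) :=
        ⟨fun q => ⟨rfl, hdiag ε hε q.2⟩, {p : G × G | p.1 = p.2}, hΔ, ε, hε,
          fun p hp => hp⟩
      obtain ⟨δ, hδ, hδ'⟩ := hmul _ hη
      exact ⟨δ, hδ, fun g x y hxy => hδ' ((g, x), (g, y)) ⟨rfl, hxy⟩⟩
    · intro ε hε
      have hη : ({p : (G × G) × (G × G) | (p.1.1, p.2.1) ∈ ε ∧ p.1.2 = p.2.2}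
          ∈ prodCoarse E E) :=
        ⟨fun q => ⟨hdiag ε hε q.1, rfl⟩, ε, hε, {p : G × G | p.1 = p.2}, hΔ,
          fun p hp => hp⟩
      obtain ⟨δ, hδ, hδ'⟩ := hmul _ hη
      exact ⟨δ, hδ, fun g x y hxy => hδ' ((x, g), (y, g)) ⟨hxy, rfl⟩⟩
  · rintro ⟨hL, hR⟩
    constructor
    · rintro η ⟨hηd, ε, hε, δ, hδ, hηsub⟩
      obtain ⟨δ', hδ', hδ'2⟩ := hL δ hδ
      obtain ⟨ε', hε', hε'2⟩ := hR ε hε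
      refine ⟨_, hcomp δ' hδ' ε' hε', ?_⟩
      rintro ⟨⟨a, x⟩, ⟨b, y⟩⟩ hp
      obtain ⟨hab, hxy⟩ := hηsub hp
      exact ⟨a * y, hδ'2 a x y hxy, hε'2 y a b hab⟩
    · intro ε hε
      obtain ⟨ε', hε', h1⟩ := hL ε hε
      have hεs : {p : G × G | (p.2, p.1) ∈ ε'} ∈ E := hsymm ε' hε'
      obtain ⟨ε'', hε'', h2⟩ := hR _ hεs
      refine ⟨ε'', hε'', ?_⟩
      rintro ⟨x, y⟩ hxy
      have h3 : ((1 : G), x⁻¹ * y) ∈ ε' := by simpa using h1 x⁻¹ x y hxy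
      have h4 : (x⁻¹ * y, (1 : G)) ∈ {p : G × G | (p.2, p.1) ∈ ε'} := h3
      have h5 := h2 y⁻¹ _ _ h4
      simpa [mul_assoc] using h5
end

section
/- A group G endowed with a coarse structure E is a right coarse group if and only if there exists a group ideal I on G such that E = E_I. -/
/-! Right translations move every entourage of a right coarse group into an entourage, so
`(x, y) ∈ ε` is controlled by `(1, y * x⁻¹)`: the entourages are determined by the sets
bounded around `1`, which form a group ideal `I` with `E = E_I`. Conversely every `ε_A` is
invariant under right translations, since `y = a * x` gives `y * g = a * (x * g)`. -/

theorem IsCoarseStructure.union_mem {X : Type*} {E : Set (Set (X × X))}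
    (hE : IsCoarseStructure E) {ε δ : Set (X × X)} (hε : ε ∈ E) (hδ : δ ∈ E) :
    ε ∪ δ ∈ E := by
  obtain ⟨hdiag, hcomp, -, hsub⟩ := hE
  refine hsub _ (hcomp ε hε δ hδ) (ε ∪ δ) ?_ fun x => Or.inl (hdiag ε hε x)
  rintro p (hp | hp)
  · exact ⟨p.2, hp, hdiag δ hδ p.2⟩
  · exact ⟨p.1, hdiag ε hε p.1, hp⟩

section

variable {G : Type*} [Group G]

theorem entourageOf_mul_right {A : Set G} {x y : G} (h : (x, y) ∈ entourageOf (X := G) A)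
    (g : G) : (x * g, y * g) ∈ entourageOf (X := G) A := by
  obtain ⟨a, ha, hy⟩ := h
  exact ⟨a, ha, by simp only [smul_eq_mul] at hy ⊢; rw [hy, mul_assoc]⟩

theorem isRightCoarseGroup_idealCoarse (I : Set (Set G)) :
    IsRightCoarseGroup (idealCoarse I) := by
  rintro ε ⟨-, A, hA, h1, hεA⟩
  refine ⟨entourageOf A, ⟨fun x => ⟨1, h1, (one_smul G x).symm⟩, A, hA, h1, subset_rfl⟩, ?_⟩
  exact fun g x y hxy => entourageOf_mul_right (hεA hxy) g

def coarseIdeal (E : Set (Set (G × G))) : Set (Set G) :=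
  {A | ∃ ε ∈ E, A ⊆ ball ε 1}

variable {E : Set (Set (G × G))}

theorem coarseIdeal_union_mem (hE : IsCoarseStructure E) {A B : Set G}
    (hA : A ∈ coarseIdeal E) (hB : B ∈ coarseIdeal E) : A ∪ B ∈ coarseIdeal E := by
  obtain ⟨ε, hε, hAε⟩ := hA
  obtain ⟨δ, hδ, hBδ⟩ := hB
  exact ⟨ε ∪ δ, hE.union_mem hε hδ,
    Set.union_subset_union hAε hBδ |>.trans fun _ h => h.elim Or.inl Or.inr⟩

theorem finite_mem_coarseIdeal (hE : IsCoarseStructure E) (hc : IsConnectedCoarse E)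
    {A : Set G} (hA : A.Finite) : A ∈ coarseIdeal E := by
  induction A, hA using Set.Finite.induction_on with
  | empty =>
    obtain ⟨ε, hε, -⟩ := hc 1 1
    exact ⟨ε, hε, Set.empty_subset _⟩
  | @insert a s _ _ hs =>
    obtain ⟨δ, hδ, hδa⟩ := hc 1 a
    exact Set.insert_eq a s ▸
      coarseIdeal_union_mem hE ⟨δ, hδ, Set.singleton_subset_iff.2 hδa⟩ hs

theorem mul_inv_mem_coarseIdeal (hE : IsCoarseStructure E) (hR : IsRightCoarseGroup E)
    {A B : Set G} (hA : A ∈ coarseIdeal E) (hB : B ∈ coarseIdeal E) :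
    {x : G | ∃ a ∈ A, ∃ b ∈ B, x = a * b⁻¹} ∈ coarseIdeal E := by
  obtain ⟨-, hcomp, hinv, -⟩ := hE
  obtain ⟨ε, hε, hAε⟩ := hA
  obtain ⟨δ, hδ, hBδ⟩ := hB
  obtain ⟨δ', hδ', hδ'_mul⟩ := hR _ (hinv δ hδ)
  obtain ⟨ε', hε', hε'_mul⟩ := hR ε hε
  refine ⟨_, hcomp δ' hδ' ε' hε', ?_⟩
  rintro x ⟨a, ha, b, hb, rfl⟩
  -- the path `1 → b⁻¹ → a * b⁻¹` is `(b, 1) ∈ δ⁻¹` and `(1, a) ∈ ε`, translated by `b⁻¹`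
  refine ⟨b⁻¹, ?_, ?_⟩
  · simpa using hδ'_mul b⁻¹ b 1 (hBδ hb)
  · simpa using hε'_mul b⁻¹ 1 a (hAε ha)

theorem isGroupIdeal_coarseIdeal (hE : IsCoarseStructure E) (hc : IsConnectedCoarse E)
    (hR : IsRightCoarseGroup E) : IsGroupIdeal (coarseIdeal E) :=
  ⟨fun _ ⟨ε, hε, hAε⟩ _ hBA => ⟨ε, hε, hBA.trans hAε⟩,
    fun _ hA _ hB => coarseIdeal_union_mem hE hA hB,
    fun _ hA => finite_mem_coarseIdeal hE hc hA,
    fun _ hA _ hB => mul_inv_mem_coarseIdeal hE hR hA hB⟩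

theorem idealCoarse_coarseIdeal (hE : IsCoarseStructure E) (hR : IsRightCoarseGroup E) :
    idealCoarse (coarseIdeal E) = E := by
  obtain ⟨hdiag, -, -, hsub⟩ := hE
  ext ε
  constructor
  · rintro ⟨hε_diag, A, ⟨δ, hδ, hAδ⟩, -, hεA⟩
    obtain ⟨δ', hδ', hδ'_mul⟩ := hR δ hδ
    refine hsub δ' hδ' ε ?_ hε_diag
    rintro ⟨x, y⟩ hxy
    obtain ⟨g, hg, hy⟩ := hεA hxy
    change y = g * x at hy
    subst hy
    simpa using hδ'_mul x 1 g (hAδ hg)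
  · intro hε
    obtain ⟨ε', hε', hε'_mul⟩ := hR ε hε
    refine ⟨hdiag ε hε, ball ε' 1, ⟨ε', hε', subset_rfl⟩, hdiag ε' hε' 1, ?_⟩
    rintro ⟨x, y⟩ hxy
    refine ⟨y * x⁻¹, (by simpa using hε'_mul x⁻¹ x y hxy : (1, y * x⁻¹) ∈ ε'), ?_⟩
    exact (inv_mul_cancel_right y x).symm

end

/-- A group `G` endowed with a (connected) coarse structure `E` is a right coarse group
if and only if `E = E_I` for some group ideal `I` on `G`. -/
theorem isRightCoarseGroup_iff_exists_ideal {G : Type*} [Group G]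
    (E : Set (Set (G × G))) (hE : IsCoarseStructure E) (hc : IsConnectedCoarse E) :
    IsRightCoarseGroup E ↔ ∃ I : Set (Set G), IsGroupIdeal I ∧ E = idealCoarse I := by
  constructor
  · intro hR
    exact ⟨coarseIdeal E, isGroupIdeal_coarseIdeal hE hc hR,
      (idealCoarse_coarseIdeal hE hR).symm⟩
  · rintro ⟨I, -, rfl⟩
    exact isRightCoarseGroup_idealCoarse I
end

section
/- If G is an infinite group with exactly two conjugacy classes, then the only invariant group ideal on G is the ideal P(G) of all subsets of G; hence there is only one group coarse structure on G. -/
/-!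
A coarse group structure `E` on `G` yields the invariant group ideal of subsets of balls
`B(1, ε)`, `ε ∈ E`. In an invariant group ideal, the conjugates of one nonidentity element
form a member; when all nonidentity elements are conjugate, this member together with `{1}`
covers `G`, so every subset of `G` belongs to the ideal. For the ideal coming from `E` this
means that some entourage contains `{1} × G`, and composing it with its inverse gives
`G × G ∈ E`: the coarse structure is the largest one.
-/

open Set

theorem IsInvariantIdeal.mem_of_forall_isConj {G : Type*} [Group G]
    (hconj : ∀ g h : G, g ≠ 1 → h ≠ 1 → IsConj g h) {I : Set (Set G)} (hI : IsGroupIdeal I)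
    (hinv : IsInvariantIdeal I) (A : Set G) : A ∈ I := by
  obtain ⟨hsub, hunion, hfin, -⟩ := hI
  rcases subsingleton_or_nontrivial G with hG | hG
  · exact hfin A A.toFinite
  obtain ⟨g, hg⟩ := exists_ne (1 : G)
  have hcover : A ⊆ {x | ∃ c : G, ∃ a ∈ ({g} : Set G), x = c⁻¹ * a * c} ∪ {1} := by
    intro x _
    by_cases hx : x = 1
    · exact Or.inr hx
    obtain ⟨c, rfl⟩ := isConj_iff.mp (hconj g x hg hx)
    exact Or.inl ⟨c⁻¹, g, rfl, by group⟩
  exact hsub _ (hunion _ (hinv _ (hfin _ (finite_singleton g))) _ (hfin _ (finite_singleton 1)))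
    A hcover

namespace IsCoarseStructure

variable {X : Type*} {E : Set (Set (X × X))}

theorem union_mem_s11 (hE : IsCoarseStructure E) {ε δ : Set (X × X)} (hε : ε ∈ E) (hδ : δ ∈ E) :
    ε ∪ δ ∈ E := by
  obtain ⟨hdiag, hcomp, -, hsub⟩ := hE
  refine hsub _ (hcomp ε hε δ hδ) _ ?_ fun x => Or.inl (hdiag ε hε x)
  rintro ⟨x, y⟩ (h | h)
  · exact ⟨y, h, hdiag δ hδ y⟩
  · exact ⟨x, hdiag ε hε x, h⟩

theorem univ_mem_of_forall_mem (hE : IsCoarseStructure E) {ε : Set (X × X)} (hε : ε ∈ E)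
    (x₀ : X) (hx₀ : ∀ y, (x₀, y) ∈ ε) : (univ : Set (X × X)) ∈ E := by
  obtain ⟨-, hcomp, hsymm, -⟩ := hE
  convert hcomp _ (hsymm ε hε) ε hε
  refine (eq_univ_of_forall fun p => ?_).symm
  exact ⟨x₀, hx₀ p.1, hx₀ p.2⟩

theorem eq_setOf_of_univ_mem (hE : IsCoarseStructure E) (huniv : (univ : Set (X × X)) ∈ E) :
    E = {ε | ∀ x : X, (x, x) ∈ ε} :=
  Set.ext fun ε => ⟨hE.1 ε, hE.2.2.2 _ huniv ε (subset_univ ε)⟩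

end IsCoarseStructure

namespace IsCoarseGroup

variable {G : Type*} [Group G] {E : Set (Set (G × G))}

theorem exists_mul_mem (hE : IsCoarseStructure E) (hG : IsCoarseGroup E) {ε δ : Set (G × G)}
    (hε : ε ∈ E) (hδ : δ ∈ E) :
    ∃ ζ ∈ E, ∀ x y u v : G, (x, y) ∈ ε → (u, v) ∈ δ → (x * u, y * v) ∈ ζ := by
  have hη : {p : (G × G) × (G × G) | (p.1.1, p.2.1) ∈ ε ∧ (p.1.2, p.2.2) ∈ δ} ∈
      prodCoarse E E :=
    ⟨fun q => ⟨hE.1 ε hε q.1, hE.1 δ hδ q.2⟩, ε, hε, δ, hδ, subset_rfl⟩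
  obtain ⟨ζ, hζ, hmul⟩ := hG.1 _ hη
  exact ⟨ζ, hζ, fun x y u v hxy huv => hmul ((x, u), (y, v)) ⟨hxy, huv⟩⟩

theorem exists_conj_mem (hE : IsCoarseStructure E) (hG : IsCoarseGroup E) {ε : Set (G × G)}
    (hε : ε ∈ E) :
    ∃ ζ ∈ E, ∀ x y g : G, (x, y) ∈ ε → (g⁻¹ * x * g, g⁻¹ * y * g) ∈ ζ := by
  obtain ⟨ζ₁, hζ₁, hright⟩ := exists_mul_mem hE hG hε hε
  obtain ⟨ζ₂, hζ₂, hleft⟩ := exists_mul_mem hE hG hζ₁ hζ₁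
  refine ⟨ζ₂, hζ₂, fun x y g hxy => ?_⟩
  have hxy' := hright x y g g hxy (hE.1 ε hε g)
  simpa only [mul_assoc] using hleft _ _ _ _ (hE.1 ζ₁ hζ₁ g⁻¹) hxy'

end IsCoarseGroup

def idealOfCoarse {G : Type*} [Group G] (E : Set (Set (G × G))) : Set (Set G) :=
  {A | ∃ ε ∈ E, A ⊆ ball ε 1}

section idealOfCoarse

variable {G : Type*} [Group G] {E : Set (Set (G × G))}

theorem isGroupIdeal_idealOfCoarse (hE : IsCoarseStructure E) (hconn : IsConnectedCoarse E)
    (hG : IsCoarseGroup E) : IsGroupIdeal (idealOfCoarse E) := by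
  refine ⟨?_, ?_, fun A hA => ?_, ?_⟩
  · rintro A ⟨ε, hε, hA⟩ B hBA
    exact ⟨ε, hε, hBA.trans hA⟩
  · rintro A ⟨ε, hε, hA⟩ B ⟨δ, hδ, hB⟩
    exact ⟨ε ∪ δ, hE.union_mem_s11 hε hδ, union_subset_union hA hB⟩
  · induction A, hA using Set.Finite.induction_on with
    | empty =>
      obtain ⟨ε, hε, -⟩ := hconn 1 1
      exact ⟨ε, hε, empty_subset _⟩
    | @insert a A _ _ ih =>
      obtain ⟨ε, hε, hA⟩ := ih
      obtain ⟨δ, hδ, ha⟩ := hconn 1 a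
      exact ⟨δ ∪ ε, hE.union_mem_s11 hδ hε, insert_subset (Or.inl ha) (hA.trans subset_union_right)⟩
  · rintro A ⟨ε, hε, hA⟩ B ⟨δ, hδ, hB⟩
    obtain ⟨δ', hδ', hinv⟩ := hG.2 δ hδ
    obtain ⟨ζ, hζ, hmul⟩ := IsCoarseGroup.exists_mul_mem hE hG hε hδ'
    refine ⟨ζ, hζ, ?_⟩
    rintro x ⟨a, ha, b, hb, rfl⟩
    have hb' : ((1 : G), b⁻¹) ∈ δ' := by simpa using hinv (1, b) (hB hb)
    simpa [ball] using hmul 1 a 1 b⁻¹ (hA ha) hb'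

theorem isInvariantIdeal_idealOfCoarse (hE : IsCoarseStructure E) (hG : IsCoarseGroup E) :
    IsInvariantIdeal (idealOfCoarse E) := by
  rintro A ⟨ε, hε, hA⟩
  obtain ⟨ζ, hζ, hconj⟩ := IsCoarseGroup.exists_conj_mem hE hG hε
  refine ⟨ζ, hζ, ?_⟩
  rintro x ⟨g, a, ha, rfl⟩
  simpa [ball] using hconj 1 a g (hA ha)

theorem IsCoarseGroup.eq_setOf_of_forall_isConj (hG : IsCoarseGroup E)
    (hconj : ∀ g h : G, g ≠ 1 → h ≠ 1 → IsConj g h) (hE : IsCoarseStructure E)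
    (hconn : IsConnectedCoarse E) : E = {ε | ∀ x : G, (x, x) ∈ ε} := by
  obtain ⟨ε, hε, hball⟩ := IsInvariantIdeal.mem_of_forall_isConj hconj
    (isGroupIdeal_idealOfCoarse hE hconn hG) (isInvariantIdeal_idealOfCoarse hE hG) univ
  exact hE.eq_setOf_of_univ_mem (hE.univ_mem_of_forall_mem hε 1 fun y => hball (mem_univ y))

end idealOfCoarse

theorem unique_group_coarse_structure_of_two_conjugacy_classes_general {G : Type*} [Group G]
    (hconj : ∀ g h : G, g ≠ 1 → h ≠ 1 → IsConj g h) :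
    (∀ I : Set (Set G), IsGroupIdeal I → IsInvariantIdeal I → ∀ A : Set G, A ∈ I) ∧
    (∀ E₁ E₂ : Set (Set (G × G)),
      IsCoarseStructure E₁ → IsConnectedCoarse E₁ → IsCoarseGroup E₁ →
      IsCoarseStructure E₂ → IsConnectedCoarse E₂ → IsCoarseGroup E₂ → E₁ = E₂) := by
  refine ⟨fun I hI hinv => IsInvariantIdeal.mem_of_forall_isConj hconj hI hinv,
    fun E₁ E₂ hE₁ hconn₁ hG₁ hE₂ hconn₂ hG₂ => ?_⟩
  rw [hG₁.eq_setOf_of_forall_isConj hconj hE₁ hconn₁,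
    hG₂.eq_setOf_of_forall_isConj hconj hE₂ hconn₂]

/-- If `G` is an infinite group with exactly two conjugacy classes (all nonidentity
elements are conjugate), then the only invariant group ideal on `G` is the ideal of all
subsets of `G`; hence there is only one (connected) group coarse structure on `G`. -/
theorem unique_group_coarse_structure_of_two_conjugacy_classes {G : Type*} [Group G]
    [Infinite G] (hconj : ∀ g h : G, g ≠ 1 → h ≠ 1 → IsConj g h) :
    (∀ I : Set (Set G), IsGroupIdeal I → IsInvariantIdeal I → ∀ A : Set G, A ∈ I) ∧
    (∀ E₁ E₂ : Set (Set (G × G)),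
      IsCoarseStructure E₁ → IsConnectedCoarse E₁ → IsCoarseGroup E₁ →
      IsCoarseStructure E₂ → IsConnectedCoarse E₂ → IsCoarseGroup E₂ → E₁ = E₂) :=
  unique_group_coarse_structure_of_two_conjugacy_classes_general hconj
end

section
/- Let (X, E) be a coarse space, A(X) the free abelian group of exponent p on X, and for symmetric ε ∈ E let Y_ε = {x − y : (x,y) ∈ ε}. If x, y ∈ X and x − y belongs to the n-fold sumset Y_{n,ε}, then (x, y) ∈ ε^n (the n-fold composition of ε). -/
/-- The `n`-fold sumset of `S` in an additive commutative group. -/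
def nSumset {A : Type*} [AddCommGroup A] (S : Set A) (n : ℕ) : Set A :=
  {a | ∃ f : Fin n → A, (∀ i, f i ∈ S) ∧ a = ∑ i, f i}

/-- The set `Y_ε = {x − y : (x, y) ∈ ε}` of differences of generators of the free
abelian group `A(X) = ⊕_{x ∈ X} ℤ/p` of exponent `p` on `X`. -/
def Yset {X : Type*} (p : ℕ) (ε : Set (X × X)) : Set (X →₀ ZMod p) :=
  {a | ∃ q ∈ ε, a = Finsupp.single q.1 (1 : ZMod p) - Finsupp.single q.2 (1 : ZMod p)}

/-- The coefficient-sum homomorphism `A(X) → ℤ/p`. -/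
noncomputable def coeffSum (X : Type*) (p : ℕ) : (X →₀ ZMod p) →+ ZMod p :=
  Finsupp.liftAddHom fun _ : X => AddMonoidHom.id (ZMod p)

/-- The `n`-fold composition `ε ∘ ε ∘ ... ∘ ε` (with `ε^0` the diagonal). -/
def compPow {X : Type*} (ε : Set (X × X)) : ℕ → Set (X × X)
  | 0 => {p | p.1 = p.2}
  | n + 1 => {p | ∃ z : X, (p.1, z) ∈ ε ∧ (z, p.2) ∈ compPow ε n}

lemma compPow_monotone {X : Type*} {ε : Set (X × X)} (hdiag : ∀ x, (x, x) ∈ ε) :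
    Monotone (compPow ε) := by
  refine monotone_nat_of_le_succ fun n => ?_
  induction n with
  | zero =>
    rintro ⟨x, y⟩ (rfl : x = y)
    exact ⟨x, hdiag x, rfl⟩
  | succ n ih =>
    rintro q ⟨z, hqz, hzq⟩
    exact ⟨z, hqz, ih hzq⟩

lemma SimpleGraph.Walk.mem_compPow_length {X : Type*} {ε : Set (X × X)} {G : SimpleGraph X}
    (hG : ∀ a b, G.Adj a b → (a, b) ∈ ε) :
    ∀ {u v : X} (p : G.Walk u v), (u, v) ∈ compPow ε p.length
  | _, _, .nil => rfl
  | _, _, .cons h p => ⟨_, hG _ _ h, p.mem_compPow_length hG⟩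

lemma SimpleGraph.Reachable.mem_compPow {X : Type*} {ε : Set (X × X)}
    (hdiag : ∀ x, (x, x) ∈ ε) {G : SimpleGraph X} [Fintype G.edgeSet]
    (hG : ∀ a b, G.Adj a b → (a, b) ∈ ε)
    {u v : X} (huv : G.Reachable u v) {n : ℕ} (hn : G.edgeFinset.card ≤ n) :
    (u, v) ∈ compPow ε n := by
  classical
  obtain ⟨p⟩ := huv
  have hlen : p.bypass.length ≤ n := (p.bypass_isPath.isTrail.length_le_card_edgeFinset).trans hn
  exact compPow_monotone hdiag hlen (p.bypass.mem_compPow_length hG)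

lemma Finsupp.eq_of_single_sub_single_eq_sum {ι X Y M : Type*} [AddCommGroup M] {c : M}
    (hc : c ≠ 0) (g : X → Y) {x y : X} (s : Finset ι) (f : ι → X × X)
    (hf : ∀ i ∈ s, g (f i).1 = g (f i).2)
    (h : single x c - single y c = ∑ i ∈ s, (single (f i).1 c - single (f i).2 c)) :
    g x = g y := by
  have := congrArg (mapDomain g) h
  simp only [mapDomain_sub, mapDomain_finsetSum, mapDomain_single] at this
  rw [Finset.sum_eq_zero fun i hi => by rw [hf i hi, sub_self], sub_eq_zero] at this
  exact (single_left_inj hc).1 this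

lemma mem_compPow_of_reachable_fromEdgeSet {ι X : Type*} [Fintype ι] {ε : Set (X × X)}
    (hdiag : ∀ x, (x, x) ∈ ε) (hsym : ∀ q : X × X, q ∈ ε ↔ (q.2, q.1) ∈ ε)
    (f : ι → X × X) (hf : ∀ i, f i ∈ ε) {u v : X}
    (huv : (SimpleGraph.fromEdgeSet (Set.range fun i => s((f i).1, (f i).2))).Reachable u v) :
    (u, v) ∈ compPow ε (Fintype.card ι) := by
  classical
  set G := SimpleGraph.fromEdgeSet (Set.range fun i => s((f i).1, (f i).2))
  have hadj : ∀ a b, G.Adj a b → (a, b) ∈ ε := by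
    rintro a b ⟨⟨i, hi⟩, -⟩
    rcases Sym2.mk_eq_mk_iff (q := (a, b)).1 hi with hi | hi
    · exact hi ▸ hf i
    · exact (hsym (a, b)).2 (show (a, b).swap ∈ ε from hi ▸ hf i)
  have hcard : G.edgeFinset.card ≤ Fintype.card ι := calc
    G.edgeFinset.card ≤ (Finset.univ.image fun i => s((f i).1, (f i).2)).card := by
      refine Finset.card_le_card fun e he => ?_
      rw [SimpleGraph.mem_edgeFinset, SimpleGraph.edgeSet_fromEdgeSet] at he
      simpa using he.1
    _ ≤ Fintype.card ι := Finset.card_image_le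
  exact huv.mem_compPow hdiag hadj hcard

/-- If `x − y` belongs to the `n`-fold sumset `Y_{n,ε}` in `A(X) = ⊕_{x∈X} ℤ/p`,
then `(x, y) ∈ ε^n`. -/
theorem mem_compPow_of_diff_mem_sumset {X : Type*} (p : ℕ) [Fact p.Prime]
    (ε : Set (X × X)) (hdiag : ∀ x : X, (x, x) ∈ ε)
    (hsym : ∀ q : X × X, q ∈ ε ↔ (q.2, q.1) ∈ ε)
    (n : ℕ) (x y : X)
    (h : Finsupp.single x (1 : ZMod p) - Finsupp.single y (1 : ZMod p) ∈
      nSumset (Yset p ε) n) :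
    (x, y) ∈ compPow ε n := by
  obtain ⟨a, ha, hsum⟩ := h
  choose f hfε hfa using ha
  set G := SimpleGraph.fromEdgeSet (Set.range fun i => s((f i).1, (f i).2))
  have hcomp : G.connectedComponentMk x = G.connectedComponentMk y := by
    refine Finsupp.eq_of_single_sub_single_eq_sum one_ne_zero _ Finset.univ f
      (fun i _ => ?_) (hsum.trans (Finset.sum_congr rfl fun i _ => hfa i))
    by_cases hi : (f i).1 = (f i).2
    · rw [hi]
    · exact SimpleGraph.ConnectedComponent.sound (SimpleGraph.Adj.reachable ⟨⟨i, rfl⟩, hi⟩)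
  simpa only [Fintype.card_fin] using mem_compPow_of_reachable_fromEdgeSet hdiag hsym f hfε
    (SimpleGraph.ConnectedComponent.exact hcomp)
end
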